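/- arXiv:1401.0885 — 6 statements merged into one kernel-verified Lean document; each statement's English description precedes it below -/
import Mathlib

section
/- Every basic open set of the Lawson topology on the poset (𝒮, ⊆) of knowledge states is open in the state topology; in particular, for each x ∈ A the complement of the principal filter ↑{x} = {Y ∈ 𝒮 | x ∈ Y} equals B_x ∪ ⋃{A_y | y ∼ x, y ≠ x} and is open in the state topology. -/
variable {A : Type*}

/-- A knowledge state: meets each equivalence class in an empty or singleton set. -/
def IsState (r : A → A → Prop) (X : Set A) : Prop :=
  ∀ x : A, X ∩ {y | r y x} = ∅ ∨ ∃ a, X ∩ {y | r y x} = {a}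

/-- The set of knowledge states. -/
def States (r : A → A → Prop) := {X : Set A // IsState r X}

/-- Subbasic positive-information set. -/
def Aset (r : A → A → Prop) (x : A) : Set (States r) := {X | x ∈ X.1}

/-- Subbasic negative-information set. -/
def Bset (r : A → A → Prop) (x : A) : Set (States r) := {X | X.1 ∩ {y | r y x} = ∅}

/-- The state topology. -/
def stateTop (r : A → A → Prop) : TopologicalSpace (States r) :=
  .generateFrom (Set.range (Aset r) ∪ Set.range (Bset r))

/-- The Lawson topology on the poset of knowledge states, generated by complements of
principal filters together with the upper sets of finite states. -/
def lawsonTop (r : A → A → Prop) : TopologicalSpace (States r) :=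
  .generateFrom ({S | ∃ X : States r, S = {Y : States r | ¬ X.1 ⊆ Y.1}} ∪
    {S | ∃ s : States r, s.1.Finite ∧ S = {Y : States r | s.1 ⊆ Y.1}})

/-! A state meets each class `[x]` in at most one point, so a state omits `x` exactly when it
misses `[x]` or contains some `y ∼ x` other than `x`; this makes the complement of `↑{x}` open in
the state topology. The Lawson generators are then unions `⋃ x ∈ X, (↑{x})ᶜ` and finite
intersections `⋂ x ∈ s, A_x`. -/

section States

variable {r : A → A → Prop}

attribute [local instance] stateTop

theorem IsState.subsingleton_inter {X : Set A} (hX : IsState r X) (z : A) :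
    (X ∩ {y | r y z}).Subsingleton := by
  rcases hX z with h | ⟨a, h⟩ <;> rw [h]
  exacts [Set.subsingleton_empty, Set.subsingleton_singleton]

theorem compl_Aset_eq_Bset_union (hrefl : ∀ x, r x x) (x : A) :
    (Aset r x)ᶜ = Bset r x ∪ ⋃ y ∈ {y | r y x ∧ y ≠ x}, Aset r y := by
  ext Y
  simp only [Aset, Bset, Set.mem_compl_iff, Set.mem_union, Set.mem_iUnion, Set.mem_ofPred_eq,
    exists_prop]
  constructor
  · intro hxY
    refine or_iff_not_imp_left.mpr fun hne => ?_
    obtain ⟨y, hyY, hyx⟩ := Set.nonempty_iff_ne_empty.mpr hne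
    exact ⟨y, ⟨hyx, fun hxy => hxY (hxy ▸ hyY)⟩, hyY⟩
  · rintro (hempty | ⟨y, ⟨hyx, hne⟩, hyY⟩) hxY
    · exact (Set.eq_empty_iff_forall_notMem.mp hempty) x ⟨hxY, hrefl x⟩
    · exact hne (Y.2.subsingleton_inter x ⟨hyY, hyx⟩ ⟨hxY, hrefl x⟩)

theorem isOpen_Aset (x : A) : IsOpen (Aset r x) :=
  .basic _ (.inl ⟨x, rfl⟩)

theorem isOpen_Bset (x : A) : IsOpen (Bset r x) :=
  .basic _ (.inr ⟨x, rfl⟩)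

theorem isOpen_compl_Aset (hrefl : ∀ x, r x x) (x : A) : IsOpen (Aset r x)ᶜ := by
  rw [compl_Aset_eq_Bset_union hrefl]
  exact (isOpen_Bset x).union (isOpen_biUnion fun y _ => isOpen_Aset y)

theorem setOf_not_subset_eq_iUnion_compl_Aset (X : States r) :
    {Y : States r | ¬ X.1 ⊆ Y.1} = ⋃ x ∈ X.1, (Aset r x)ᶜ := by
  ext Y
  simp [Set.not_subset, Aset]

theorem setOf_subset_eq_iInter_Aset (s : States r) :
    {Y : States r | s.1 ⊆ Y.1} = ⋂ x ∈ s.1, Aset r x := by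
  ext Y
  simp [Set.subset_def, Aset]

theorem isOpen_setOf_not_subset (hrefl : ∀ x, r x x) (X : States r) :
    IsOpen {Y : States r | ¬ X.1 ⊆ Y.1} := by
  rw [setOf_not_subset_eq_iUnion_compl_Aset]
  exact isOpen_biUnion fun x _ => isOpen_compl_Aset hrefl x

theorem isOpen_setOf_subset_of_finite (s : States r) (hs : s.1.Finite) :
    IsOpen {Y : States r | s.1 ⊆ Y.1} := by
  rw [setOf_subset_eq_iInter_Aset]
  exact hs.isOpen_biInter fun x _ => isOpen_Aset x

end States

theorem stateTop_le_lawsonTop (r : A → A → Prop) (hr : Equivalence r) :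
    stateTop r ≤ lawsonTop r ∧
      ∀ x : A,
        ({Y : States r | x ∈ Y.1}ᶜ = Bset r x ∪ ⋃ y ∈ {y | r y x ∧ y ≠ x}, Aset r y) ∧
        @IsOpen _ (stateTop r) ({Y : States r | x ∈ Y.1}ᶜ) := by
  refine ⟨le_generateFrom ?_, fun x => ⟨compl_Aset_eq_Bset_union hr.refl x,
    isOpen_compl_Aset hr.refl x⟩⟩
  rintro S (⟨X, rfl⟩ | ⟨s, hs, rfl⟩)
  exacts [isOpen_setOf_not_subset hr.refl X, isOpen_setOf_subset_of_finite s hs]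
end

section
/- For x ∈ A, the set B_x = {X ∈ 𝒮 | X ∩ [x] = ∅} is open in the Lawson topology on (𝒮, ⊆) if and only if the equivalence class [x] is finite. -/
/-!
A Lawson neighbourhood of the empty state contains a finite intersection of subbasic sets, and
a subbasic set containing `∅` can miss at most one singleton state `{z}` (the complement of `↑{z}`).
So every Lawson neighbourhood of `∅` contains all but finitely many singleton states. Since
`{z} ∈ B_x` exactly when `z ∉ [x]`, openness of `B_x` forces `[x]` to be finite. Conversely
`B_x = ⋂_{z ∈ [x]} {Y | z ∉ Y}` is a finite intersection of complements of principal filters `↑{z}`.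
-/

variable {A : Type*}

open Topology

def lawsonSubbasis (r : A → A → Prop) : Set (Set (States r)) :=
  {S | ∃ X : States r, S = {Y : States r | ¬ X.1 ⊆ Y.1}} ∪
    {S | ∃ s : States r, s.1.Finite ∧ S = {Y : States r | s.1 ⊆ Y.1}}

theorem lawsonTop_eq_generateFrom (r : A → A → Prop) :
    lawsonTop r = .generateFrom (lawsonSubbasis r) := rfl

namespace States

variable (r : A → A → Prop)

def empty : States r :=
  ⟨∅, fun _ => Or.inl (Set.empty_inter _)⟩

def singleton (z : A) : States r :=
  ⟨{z}, fun _ => (Set.subset_singleton_iff_eq.mp Set.inter_subset_left).imp id fun h => ⟨z, h⟩⟩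

variable {r}

theorem singleton_subset_iff {z : A} {Y : States r} : (singleton r z).1 ⊆ Y.1 ↔ z ∈ Y.1 :=
  Set.singleton_subset_iff

end States

theorem singleton_mem_Bset_iff {r : A → A → Prop} {x z : A} :
    States.singleton r z ∈ Bset r x ↔ ¬ r z x := by
  show ({z} : Set A) ∩ {y | r y x} = ∅ ↔ _
  rw [Set.singleton_inter_eq_empty, Set.mem_ofPred_eq]

theorem Bset_eq_biInter (r : A → A → Prop) (x : A) :
    Bset r x = ⋂ z ∈ {y | r y x}, {Y : States r | z ∉ Y.1} := by
  ext Y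
  simp only [Bset, Set.mem_iInter₂, Set.mem_ofPred_eq, Set.eq_empty_iff_forall_notMem,
    Set.mem_inter_iff, not_and]
  exact forall_congr' fun z => imp_not_comm

theorem isOpen_setOf_notMem (r : A → A → Prop) (z : A) :
    IsOpen[lawsonTop r] {Y : States r | z ∉ Y.1} := by
  refine TopologicalSpace.GenerateOpen.basic _ (Or.inl ⟨States.singleton r z, ?_⟩)
  simp only [States.singleton_subset_iff]

theorem subsingleton_setOf_singleton_notMem_of_mem_lawsonSubbasis {r : A → A → Prop}
    {V : Set (States r)} (hV : V ∈ lawsonSubbasis r) (hempty : States.empty r ∈ V) :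
    {z | States.singleton r z ∉ V}.Subsingleton := by
  rcases hV with ⟨X, rfl⟩ | ⟨s, -, rfl⟩
  · -- `X ≠ ∅`, so `X ⊆ {z}` pins down `X = {z}`.
    have hX : X.1.Nonempty := Set.nonempty_iff_ne_empty.mpr fun h => hempty (h ▸ subset_rfl)
    intro a ha b hb
    simp only [Set.mem_ofPred_eq, not_not] at ha hb
    obtain ⟨w, hw⟩ := hX
    exact (ha hw).symm.trans (hb hw)
  · intro a ha
    exact absurd (hempty.trans (Set.empty_subset _)) ha

theorem finite_setOf_singleton_notMem_of_isOpen {r : A → A → Prop} {U : Set (States r)}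
    (hU : IsOpen[lawsonTop r] U) (hempty : States.empty r ∈ U) :
    {z | States.singleton r z ∉ U}.Finite := by
  let := lawsonTop r
  obtain ⟨_, ⟨F, ⟨hF, hFsub⟩, rfl⟩, hemptyF, hFU⟩ :=
    (TopologicalSpace.isTopologicalBasis_of_subbasis (lawsonTop_eq_generateFrom r)
      ).exists_subset_of_mem_open hempty hU
  refine (hF.biUnion fun V hV => (subsingleton_setOf_singleton_notMem_of_mem_lawsonSubbasis
    (hFsub hV) (hemptyF V hV)).finite).subset fun z hz => ?_
  by_contra hzF
  simp only [Set.mem_iUnion, Set.mem_ofPred_eq, not_exists, not_not] at hzF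
  exact hz (hFU fun V hV => hzF V hV)

theorem lawson_open_Bset_iff_general (r : A → A → Prop) (x : A) :
    @IsOpen _ (lawsonTop r) (Bset r x) ↔ {y | r y x}.Finite := by
  constructor
  · intro hopen
    have hempty : States.empty r ∈ Bset r x := Set.empty_inter _
    simpa only [singleton_mem_Bset_iff, not_not] using
      finite_setOf_singleton_notMem_of_isOpen hopen hempty
  · intro hfin
    rw [Bset_eq_biInter]
    exact @Set.Finite.isOpen_biInter _ _ (lawsonTop r) _ _ hfin fun z _ => isOpen_setOf_notMem r z

theorem lawson_open_Bset_iff (r : A → A → Prop) (hr : Equivalence r) (x : A) :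
    @IsOpen _ (lawsonTop r) (Bset r x) ↔ {y | r y x}.Finite :=
  lawson_open_Bset_iff_general r x
end

section
/- If all equivalence classes of ∼ are singletons and there are infinitely many of them, then the state topology on 𝒮 is homeomorphic to the Cantor space 2^ℕ. -/
variable {A : Type*}

/-!
When `r` is equality every subset of `A` is a state, and the subbasic sets `Aset r a`, `Bset r a`
are exactly the sets where the indicator function takes the value `true`, resp. `false`, at `a`.
Hence the state topology is the product topology on `A → Bool`, which is Cantor space
since `A ≃ ℕ`.
-/

namespace States

variable {r : A → A → Prop}

theorem isState_of_forall_iff_eq (hsing : ∀ x y : A, r x y ↔ x = y) (X : Set A) :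
    IsState r X := by
  intro x
  have hclass : {y | r y x} = {x} := by ext y; simp [hsing]
  rw [hclass]
  by_cases hx : x ∈ X
  · exact Or.inr ⟨x, Set.inter_singleton_of_mem hx⟩
  · exact Or.inl (Set.inter_singleton_eq_empty.mpr hx)

theorem bset_eq_of_forall_iff_eq (hsing : ∀ x y : A, r x y ↔ x = y) (a : A) :
    Bset r a = {X | a ∉ X.1} := by
  have hclass : {y | r y a} = {a} := by ext y; simp [hsing]
  simp only [Bset, hclass, Set.inter_singleton_eq_empty]

open Classical in
@[simps]
noncomputable def equivBoolFun (hsing : ∀ x y : A, r x y ↔ x = y) : States r ≃ (A → Bool) where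
  toFun X a := decide (a ∈ X.1)
  invFun f := ⟨{a | f a}, isState_of_forall_iff_eq hsing _⟩
  left_inv X := Subtype.ext (by ext; simp)
  right_inv f := by ext; simp

variable (hsing : ∀ x y : A, r x y ↔ x = y)

theorem preimage_equivBoolFun_eq_true (a : A) :
    (fun X => equivBoolFun hsing X a) ⁻¹' {true} = Aset r a := by
  ext X
  simp [Aset]

theorem preimage_equivBoolFun_eq_false (a : A) :
    (fun X => equivBoolFun hsing X a) ⁻¹' {false} = Bset r a := by
  ext X
  simp [bset_eq_of_forall_iff_eq hsing]

theorem preimage_equivBoolFun_symm_aset (a : A) :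
    (equivBoolFun hsing).symm ⁻¹' Aset r a = (fun f => f a) ⁻¹' {true} := by
  ext f
  simp [Aset]

theorem preimage_equivBoolFun_symm_bset (a : A) :
    (equivBoolFun hsing).symm ⁻¹' Bset r a = (fun f => f a) ⁻¹' {false} := by
  ext f
  simp [bset_eq_of_forall_iff_eq hsing]

theorem continuous_equivBoolFun :
    letI : TopologicalSpace (States r) := stateTop r
    Continuous (equivBoolFun hsing) := by
  let : TopologicalSpace (States r) := stateTop r
  refine continuous_pi fun a => continuous_discrete_rng.mpr ?_
  rintro (_ | _)
  · rw [preimage_equivBoolFun_eq_false hsing a]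
    exact TopologicalSpace.isOpen_generateFrom_of_mem (Or.inr ⟨a, rfl⟩)
  · rw [preimage_equivBoolFun_eq_true hsing a]
    exact TopologicalSpace.isOpen_generateFrom_of_mem (Or.inl ⟨a, rfl⟩)

theorem continuous_equivBoolFun_symm :
    letI : TopologicalSpace (States r) := stateTop r
    Continuous (equivBoolFun hsing).symm := by
  refine continuous_generateFrom_iff.mpr ?_
  rintro s (⟨a, rfl⟩ | ⟨a, rfl⟩)
  · rw [preimage_equivBoolFun_symm_aset hsing a]
    exact (continuous_apply a).isOpen_preimage _ (isOpen_discrete _)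
  · rw [preimage_equivBoolFun_symm_bset hsing a]
    exact (continuous_apply a).isOpen_preimage _ (isOpen_discrete _)

noncomputable def homeomorphBoolFun :
    letI : TopologicalSpace (States r) := stateTop r
    States r ≃ₜ (A → Bool) :=
  letI : TopologicalSpace (States r) := stateTop r
  { toEquiv := equivBoolFun hsing
    continuous_toFun := continuous_equivBoolFun hsing
    continuous_invFun := continuous_equivBoolFun_symm hsing }

end States

theorem stateTop_homeomorph_cantor (r : A → A → Prop) [Countable A] [Infinite A]
    (hsing : ∀ x y : A, r x y ↔ x = y) :
    letI : TopologicalSpace (States r) := stateTop r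
    Nonempty (States r ≃ₜ (ℕ → Bool)) := by
  let : TopologicalSpace (States r) := stateTop r
  obtain ⟨eA⟩ : Nonempty (A ≃ ℕ) := ⟨(nonempty_denumerable_iff.mpr ⟨‹_›, ‹_›⟩).some.eqv⟩
  exact ⟨(States.homeomorphBoolFun hsing).trans (Homeomorph.piCongrLeft (Y := fun _ => Bool) eA)⟩
end

section
/- The state topology on 𝒮 is homeomorphic to the product space ∏_{[x] ∈ A/∼} ([x] ⊎ 1) of discrete spaces, where 1 is a one-point space representing the undefined answer. -/
variable {A : Type*}

/-!
A state `X` is the same thing as a choice, for every class `q`, of an answer in `q ⊎ 1`: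
the unique element of `X ∩ q`, or "undefined" when `X ∩ q = ∅`. Under this correspondence
`A_a` is the set of families answering `a` on `[a]`, and `B_x` the set of families leaving `[x]`
undefined. These are the preimages of points under the coordinate projections, so the subbasis
of the state topology is carried onto a subbasis of the product of discrete spaces.
-/

lemma IsState.eq_of_rel {r : A → A → Prop} {X : Set A} (hX : IsState r X) (hr : ∀ a, r a a)
    {a b : A} (ha : a ∈ X) (hb : b ∈ X) (hab : r a b) : a = b := by
  have ha' : a ∈ X ∩ {y | r y b} := ⟨ha, hab⟩
  have hb' : b ∈ X ∩ {y | r y b} := ⟨hb, hr b⟩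
  rcases hX b with hempty | ⟨c, hc⟩
  · simp [hempty] at ha'
  · rw [hc] at ha' hb'
    exact ha'.trans hb'.symm

namespace States

variable (s : Setoid A)

abbrev Answers := (q : Quotient s) → Option {a : A // Quotient.mk s a = q}

open Classical in
noncomputable def toPi (X : States s.r) : Answers s := fun q =>
  if h : ∃ a, Quotient.mk s a = q ∧ a ∈ X.1 then some ⟨h.choose, h.choose_spec.1⟩ else none

variable {s}

lemma toPi_eq_some_iff (X : States s.r) {q : Quotient s} (a : {a : A // Quotient.mk s a = q}) :
    toPi s X q = some a ↔ a.1 ∈ X.1 := by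
  obtain ⟨a, rfl⟩ := a
  unfold toPi
  split_ifs with h
  · rw [Option.some_inj, Subtype.ext_iff]
    exact ⟨fun e => e ▸ h.choose_spec.2, fun ha =>
      X.2.eq_of_rel s.refl' h.choose_spec.2 ha (Quotient.eq.1 h.choose_spec.1)⟩
  · exact iff_of_false (by simp) fun ha => h ⟨a, rfl, ha⟩

lemma toPi_eq_none_iff (X : States s.r) (x : A) :
    toPi s X (Quotient.mk s x) = none ↔ X.1 ∩ {y | s.r y x} = ∅ := by
  simp only [Option.eq_none_iff_forall_ne_some, ne_eq, toPi_eq_some_iff, Subtype.forall,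
    Quotient.eq, Set.eq_empty_iff_forall_notMem, Set.mem_inter_iff, Set.mem_ofPred_eq]
  exact ⟨fun h y ⟨hy, hyx⟩ => h y hyx hy, fun h y hyx hy => h y ⟨hy, hyx⟩⟩

variable (s)

-- Phrased through `Subtype.val` so that membership can be rewritten along `⟦a⟧ = ⟦x⟧`.
def ofPi (f : Answers s) : States s.r :=
  ⟨{a | (f (Quotient.mk s a)).map Subtype.val = some a}, fun x => by
    refine (Set.eq_empty_or_nonempty _).imp id fun ⟨a, ha, hax⟩ => ⟨a, ?_⟩
    refine Set.Subset.antisymm (fun b ⟨hb, hbx⟩ => ?_) (Set.singleton_subset_iff.2 ⟨ha, hax⟩)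
    rw [Set.mem_ofPred_eq, Quotient.sound hax] at ha
    rw [Set.mem_ofPred_eq, Quotient.sound hbx, ha] at hb
    exact (Option.some_injective _ hb).symm⟩

variable {s}

lemma mem_ofPi_iff (f : Answers s) (a : A) :
    a ∈ (ofPi s f).1 ↔ f (Quotient.mk s a) = some ⟨a, rfl⟩ :=
  (Option.map_injective Subtype.val_injective).eq_iff (a := f _) (b := some ⟨a, rfl⟩)

lemma ofPi_toPi (X : States s.r) : ofPi s (toPi s X) = X :=
  Subtype.ext <| Set.ext fun a => by rw [mem_ofPi_iff, toPi_eq_some_iff]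

lemma toPi_ofPi (f : Answers s) : toPi s (ofPi s f) = f :=
  funext fun q => Option.ext fun a => by
    rw [toPi_eq_some_iff, mem_ofPi_iff]
    obtain ⟨a, rfl⟩ := a
    rfl

lemma preimage_toPi_some {q : Quotient s} (a : {a : A // Quotient.mk s a = q}) :
    (fun X => toPi s X q) ⁻¹' {some a} = Aset s.r a.1 :=
  Set.ext fun X => toPi_eq_some_iff X a

lemma preimage_toPi_none (x : A) :
    (fun X => toPi s X (Quotient.mk s x)) ⁻¹' {none} = Bset s.r x :=
  Set.ext fun X => toPi_eq_none_iff X x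

lemma preimage_ofPi_Aset (a : A) :
    ofPi s ⁻¹' Aset s.r a = (fun f : Answers s => f (Quotient.mk s a)) ⁻¹' {some ⟨a, rfl⟩} :=
  Set.ext fun f => mem_ofPi_iff f a

lemma preimage_ofPi_Bset (x : A) :
    ofPi s ⁻¹' Bset s.r x = (fun f : Answers s => f (Quotient.mk s x)) ⁻¹' {none} :=
  Set.ext fun f => (toPi_eq_none_iff (ofPi s f) x).symm.trans (by rw [toPi_ofPi]; rfl)

section Topology

attribute [local instance] stateTop

lemma isOpen_Aset (a : A) : IsOpen (Aset s.r a) :=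
  TopologicalSpace.isOpen_generateFrom_of_mem (Or.inl ⟨a, rfl⟩)

lemma isOpen_Bset (x : A) : IsOpen (Bset s.r x) :=
  TopologicalSpace.isOpen_generateFrom_of_mem (Or.inr ⟨x, rfl⟩)

variable [∀ q : Quotient s, TopologicalSpace (Option {a : A // Quotient.mk s a = q})]
  [∀ q : Quotient s, DiscreteTopology (Option {a : A // Quotient.mk s a = q})]

variable (s)

lemma continuous_toPi : Continuous (toPi s) := by
  refine continuous_pi fun q => continuous_discrete_rng.2 ?_
  rintro (_ | a)
  · obtain ⟨x, rfl⟩ := q.exists_rep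
    rw [preimage_toPi_none]
    exact isOpen_Bset x
  · rw [preimage_toPi_some]
    exact isOpen_Aset a.1

lemma continuous_ofPi : Continuous (ofPi s) := by
  refine continuous_generateFrom_iff.2 ?_
  rintro _ (⟨a, rfl⟩ | ⟨x, rfl⟩)
  · rw [preimage_ofPi_Aset]
    exact (isOpen_discrete _).preimage (continuous_apply _)
  · rw [preimage_ofPi_Bset]
    exact (isOpen_discrete _).preimage (continuous_apply _)

noncomputable def homeomorphPi : States s.r ≃ₜ Answers s where
  toFun := toPi s
  invFun := ofPi s
  left_inv := ofPi_toPi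
  right_inv := toPi_ofPi
  continuous_toFun := continuous_toPi s
  continuous_invFun := continuous_ofPi s

end Topology

end States

theorem stateTop_homeomorph_pi (s : Setoid A) :
    letI : TopologicalSpace (States s.r) := stateTop s.r
    letI : ∀ q : Quotient s, TopologicalSpace (Option {a : A // Quotient.mk s a = q}) :=
      fun _ => ⊥
    Nonempty (States s.r ≃ₜ ((q : Quotient s) → Option {a : A // Quotient.mk s a = q})) :=
  letI : ∀ q : Quotient s, TopologicalSpace (Option {a : A // Quotient.mk s a = q}) := fun _ => ⊥
  haveI : ∀ q : Quotient s, DiscreteTopology (Option {a : A // Quotient.mk s a = q}) :=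
    fun _ => discreteTopology_bot _
  ⟨States.homeomorphPi s⟩
end

section
/- Every layered knowledge structure has a model: there exists a knowledge state X that is sound (every x ∈ X satisfies tr(x, X) = true) and complete (whenever X ∩ [x] = ∅ then tr(x, X) = false). -/
/-!
Well-order the answers. The model is built by recursion on levels: an answer `x` belongs to it
iff `x` is the least member of its class that is true at the part of the model below `lev x`.
This part is already fixed when `x` is considered, and by layering it is all that `tr x` sees,
so soundness is immediate; and if the model missed a class containing an answer true there, the
least such answer would have been put in.
-/

variable {A : Type*}

theorem isState_mono {r : A → A → Prop} {X Y : Set A} (hX : IsState r X) (hYX : Y ⊆ X) :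
    IsState r Y := by
  intro x
  rcases hX x with h0 | ⟨a, ha⟩
  · left
    apply Set.eq_empty_of_subset_empty
    rw [← h0]
    exact Set.inter_subset_inter_left _ hYX
  · have h : Y ∩ {y | r y x} ⊆ {a} := ha ▸ Set.inter_subset_inter_left _ hYX
    rcases Set.subset_singleton_iff_eq.mp h with h | h
    · exact Or.inl h
    · exact Or.inr ⟨a, h⟩

/-- Restriction of a knowledge state to answers of level below `α`. -/
def restrict (r : A → A → Prop) (lev : A → Ordinal) (α : Ordinal) (X : States r) : States r :=
  ⟨{y ∈ X.1 | lev y < α}, isState_mono X.2 (Set.sep_subset _ _)⟩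

namespace LayeredModel

variable [LinearOrder A] (r : A → A → Prop) (lev : A → Ordinal) (tr : A → States r → Bool)

def IsLeastTrueAt (Y : Set A) (x : A) : Prop :=
  ∃ h : IsState r Y, tr x ⟨Y, h⟩ = true ∧ ∀ y, r y x → tr y ⟨Y, h⟩ = true → x ≤ y

noncomputable def stage (α : Ordinal) : Set A :=
  {x | ∃ _ : lev x < α, IsLeastTrueAt r tr (stage (lev x)) x}
termination_by α

def model : Set A := {x | IsLeastTrueAt r tr (stage r lev tr (lev x)) x}

theorem stage_eq (α : Ordinal) : stage r lev tr α = {x ∈ model r lev tr | lev x < α} := by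
  rw [stage]
  ext x
  exact ⟨fun ⟨hlt, hx⟩ => ⟨hx, hlt⟩, fun ⟨hx, hlt⟩ => ⟨hlt, hx⟩⟩

variable {r lev tr} (hr : Equivalence r) (hlev : ∀ x y : A, r x y → lev x = lev y)
include hr hlev

theorem eq_of_mem_model {x y : A} (hx : x ∈ model r lev tr) (hy : y ∈ model r lev tr)
    (hxy : r x y) : x = y := by
  obtain ⟨_, hx_true, hx_least⟩ := hx
  obtain ⟨_, hy_true, hy_least⟩ := hy
  have hstage : stage r lev tr (lev y) = stage r lev tr (lev x) := by rw [hlev x y hxy]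
  simp only [hstage] at hy_true hy_least
  exact le_antisymm (hx_least y (hr.symm hxy) hy_true) (hy_least x hxy hx_true)

theorem isState_model : IsState r (model r lev tr) := by
  intro z
  rcases Set.eq_empty_or_nonempty (model r lev tr ∩ {y | r y z}) with h | ⟨a, ha, haz⟩
  · exact Or.inl h
  · refine Or.inr ⟨a, Set.eq_singleton_iff_unique_mem.mpr ⟨⟨ha, haz⟩, ?_⟩⟩
    rintro b ⟨hb, hbz⟩
    exact eq_of_mem_model hr hlev hb ha (hr.trans hbz (hr.symm haz))

theorem isState_stage (α : Ordinal) : IsState r (stage r lev tr α) := by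
  rw [stage_eq]
  exact isState_mono (isState_model hr hlev) (Set.sep_subset _ _)

theorem tr_model (hlayer : ∀ (x : A) (X : States r), tr x X = tr x (restrict r lev (lev x) X))
    (x : A) :
    tr x ⟨model r lev tr, isState_model hr hlev⟩ =
      tr x ⟨stage r lev tr (lev x), isState_stage hr hlev (lev x)⟩ :=
  (hlayer x _).trans (congrArg (tr x) (Subtype.ext (stage_eq r lev tr (lev x)).symm))

theorem exists_mem_model_of_tr_stage [WellFoundedLT A] {x : A}
    (hx : tr x ⟨stage r lev tr (lev x), isState_stage hr hlev (lev x)⟩ = true) :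
    ∃ y ∈ model r lev tr, r y x := by
  let T : Set A :=
    {y | r y x ∧ tr y ⟨stage r lev tr (lev y), isState_stage hr hlev (lev y)⟩ = true}
  obtain ⟨y, ⟨hyx, hy_true⟩, hy_min⟩ := wellFounded_lt.has_min T ⟨x, hr.refl x, hx⟩
  refine ⟨y, ⟨isState_stage hr hlev (lev y), hy_true, fun z hzy hz_true => ?_⟩, hyx⟩
  have hstage : stage r lev tr (lev z) = stage r lev tr (lev y) := by rw [hlev z y hzy]
  exact not_lt.mp (hy_min z ⟨hr.trans hzy hyx, by simpa only [hstage] using hz_true⟩)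

end LayeredModel

open LayeredModel in
theorem exists_model_general (r : A → A → Prop) (hr : Equivalence r)
    (lev : A → Ordinal) (hlev : ∀ x y : A, r x y → lev x = lev y)
    (tr : A → States r → Bool)
    (hlayer : ∀ (x : A) (X : States r), tr x X = tr x (restrict r lev (lev x) X)) :
    ∃ X : States r,
      (∀ x ∈ X.1, tr x X = true) ∧
      (∀ x : A, X.1 ∩ {y | r y x} = ∅ → tr x X = false) := by
  obtain ⟨_, _⟩ := exists_wellFoundedLT A
  refine ⟨⟨model r lev tr, isState_model hr hlev⟩, fun x hx => ?_, fun x hx => ?_⟩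
  · obtain ⟨_, hx_true, -⟩ := hx
    rw [tr_model hr hlev hlayer]
    exact hx_true
  · rw [tr_model hr hlev hlayer, ← Bool.not_eq_true]
    intro hx_true
    obtain ⟨y, hy, hyx⟩ := exists_mem_model_of_tr_stage hr hlev hx_true
    exact hx.subset ⟨hy, hyx⟩

theorem exists_model (r : A → A → Prop) [Countable A] (hr : Equivalence r)
    (lev : A → Ordinal) (hlev : ∀ x y : A, r x y → lev x = lev y)
    (tr : A → States r → Bool)
    (hcont : ∀ x : A, @Continuous _ _ (stateTop r) ⊥ (tr x))
    (hlayer : ∀ (x : A) (X : States r), tr x X = tr x (restrict r lev (lev x) X)) :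
    ∃ X : States r,
      (∀ x ∈ X.1, tr x X = true) ∧
      (∀ x : A, X.1 ∩ {y | r y x} = ∅ → tr x X = false) :=
  exists_model_general r hr lev hlev tr hlayer
end

section
/- If X is a sound knowledge state and s ⊆ X is a finite state, then there exists a finite sound state t with s ⊆ t ⊆ X. -/
/-! Continuity of `tr x` at `X↾lev x` yields a basic neighbourhood that constrains only finitely
many answers of `X`, all of level below `lev x`; by layering, `tr x` is then true on every state
lying between those answers and `X`. Closing `s` under these finite certificates, by well-founded
induction on levels, gives a finite state inside `X` on which every answer is certified. -/

variable {A : Type*}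

open TopologicalSpace Topology

section States

variable {r : A → A → Prop}

theorem isState_singleton (a : A) : IsState r {a} := fun _ =>
  (Set.subset_singleton_iff_eq.mp Set.inter_subset_left).imp id fun h => ⟨a, h⟩

theorem Aset_injective : Function.Injective (Aset r) := fun a b hab => by
  have ha : (⟨{a}, isState_singleton a⟩ : States r) ∈ Aset r a := rfl
  rw [hab] at ha
  exact (Set.mem_singleton_iff.mp ha).symm

/-- Only the positive subbasic sets `Aset` constrain `t`: the negative ones `Bset` are closed under
passing to substates. -/
theorem exists_finite_forall_between_mem_of_isOpen {U : Set (States r)}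
    (hU : IsOpen[stateTop r] U) {X : States r} (hXU : X ∈ U) :
    ∃ W : Set A, W.Finite ∧ W ⊆ X.1 ∧ ∀ t : States r, W ⊆ t.1 → t.1 ⊆ X.1 → t ∈ U := by
  let _ := stateTop r
  obtain ⟨_, ⟨f, ⟨hf, hfS⟩, rfl⟩, hXf, hfU⟩ :=
    (isTopologicalBasis_of_subbasis rfl).exists_subset_of_mem_open hXU hU
  refine ⟨Aset r ⁻¹' f, hf.preimage Aset_injective.injOn, fun w hw => hXf _ hw, ?_⟩
  intro t hWt htX
  refine hfU fun u hu => ?_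
  rcases hfS hu with ⟨a, rfl⟩ | ⟨a, rfl⟩
  · exact hWt hu
  · exact Set.subset_eq_empty (Set.inter_subset_inter_left _ htX) (hXf _ hu)

theorem exists_finite_certificate {lev : A → Ordinal} {tr : A → States r → Bool} {x : A}
    (hcont : @Continuous _ _ (stateTop r) ⊥ (tr x))
    (hlayer : ∀ X : States r, tr x X = tr x (restrict r lev (lev x) X))
    {X : States r} (hx : tr x X = true) :
    ∃ W : Set A, W.Finite ∧ W ⊆ X.1 ∧ (∀ w ∈ W, lev w < lev x) ∧
      ∀ t : States r, W ⊆ t.1 → t.1 ⊆ X.1 → tr x t = true := by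
  have hopen : IsOpen[stateTop r] (tr x ⁻¹' {true}) :=
    @Continuous.isOpen_preimage _ _ (stateTop r) ⊥ _ hcont _ (@isOpen_discrete _ ⊥ ⟨rfl⟩ _)
  obtain ⟨W, hWfin, hWX, hW⟩ := exists_finite_forall_between_mem_of_isOpen hopen
    (X := restrict r lev (lev x) X) (by rwa [Set.mem_preimage, Set.mem_singleton_iff, ← hlayer])
  refine ⟨W, hWfin, fun w hw => (hWX hw).1, fun w hw => (hWX hw).2, fun t hWt htX => ?_⟩
  rw [hlayer]
  exact hW _ (fun w hw => ⟨hWt hw, (hWX hw).2⟩) fun y hy => ⟨htX hy.1, hy.2⟩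

end States

section Closure

variable {α : Type*} [Preorder α] [WellFoundedLT α] {X : Set A} {W : A → Set A}

theorem exists_finite_closed_superset_of_forall_mem {s : Set A} (hs : s.Finite)
    (h : ∀ x ∈ s, ∃ T : Set A, T.Finite ∧ x ∈ T ∧ T ⊆ X ∧ ∀ y ∈ T, W y ⊆ T) :
    ∃ T : Set A, T.Finite ∧ s ⊆ T ∧ T ⊆ X ∧ ∀ y ∈ T, W y ⊆ T := by
  choose! T hTfin hxT hTX hTW using h
  refine ⟨⋃ x ∈ s, T x, hs.biUnion hTfin, fun x hx => Set.mem_biUnion hx (hxT x hx),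
    Set.iUnion₂_subset hTX, fun y hy => ?_⟩
  obtain ⟨x, hx, hyx⟩ := Set.mem_iUnion₂.mp hy
  exact (hTW x hx y hyx).trans (Set.subset_biUnion_of_mem hx)

theorem exists_finite_closed_of_lt (lev : A → α) (hfin : ∀ x ∈ X, (W x).Finite)
    (hWX : ∀ x ∈ X, W x ⊆ X) (hlt : ∀ x ∈ X, ∀ w ∈ W x, lev w < lev x) {x : A} (hx : x ∈ X) :
    ∃ T : Set A, T.Finite ∧ x ∈ T ∧ T ⊆ X ∧ ∀ y ∈ T, W y ⊆ T := by
  induction x using (InvImage.wf lev wellFounded_lt).induction with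
  | _ x ih =>
    obtain ⟨T, hTfin, hWT, hTX, hTW⟩ := exists_finite_closed_superset_of_forall_mem (hfin x hx)
      fun w hw => ih w (hlt x hx w hw) (hWX x hx hw)
    refine ⟨insert x T, hTfin.insert x, Set.mem_insert x T, Set.insert_subset hx hTX, ?_⟩
    rintro y (rfl | hy)
    · exact hWT.trans (Set.subset_insert y T)
    · exact (hTW y hy).trans (Set.subset_insert x T)

end Closure

theorem finite_sound_extension_general (r : A → A → Prop)
    (lev : A → Ordinal)
    (tr : A → States r → Bool)
    (hcont : ∀ x : A, @Continuous _ _ (stateTop r) ⊥ (tr x))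
    (hlayer : ∀ (x : A) (X : States r), tr x X = tr x (restrict r lev (lev x) X))
    (X : States r) (hX : ∀ x ∈ X.1, tr x X = true)
    (s : Set A) (hs : s.Finite) (hsX : s ⊆ X.1) :
    ∃ t : States r, t.1.Finite ∧ s ⊆ t.1 ∧ t.1 ⊆ X.1 ∧ ∀ x ∈ t.1, tr x t = true := by
  choose! W hWfin hWX hWlt hW using
    fun x (hx : x ∈ X.1) => exists_finite_certificate (hcont x) (hlayer x) (hX x hx)
  obtain ⟨T, hTfin, hsT, hTX, hTW⟩ := exists_finite_closed_superset_of_forall_mem hs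
    fun x hx => exists_finite_closed_of_lt lev hWfin hWX hWlt (hsX hx)
  exact ⟨⟨T, isState_mono X.2 hTX⟩, hTfin, hsT, hTX, fun x hx => hW x (hTX hx) _ (hTW x hx) hTX⟩

theorem finite_sound_extension (r : A → A → Prop) [Countable A] (hr : Equivalence r)
    (lev : A → Ordinal) (hlev : ∀ x y : A, r x y → lev x = lev y)
    (tr : A → States r → Bool)
    (hcont : ∀ x : A, @Continuous _ _ (stateTop r) ⊥ (tr x))
    (hlayer : ∀ (x : A) (X : States r), tr x X = tr x (restrict r lev (lev x) X))
    (X : States r) (hX : ∀ x ∈ X.1, tr x X = true)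
    (s : Set A) (hs : s.Finite) (hsX : s ⊆ X.1) :
    ∃ t : States r, t.1.Finite ∧ s ⊆ t.1 ∧ t.1 ⊆ X.1 ∧ ∀ x ∈ t.1, tr x t = true :=
  finite_sound_extension_general r lev tr hcont hlayer X hX s hs hsX
end
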